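/- arXiv:1502.05222 — 4 statements merged into one kernel-verified Lean document; each statement's English description precedes it below -/
import Mathlib

section
/- Let the intersection point of the two lines defining the upper envelope δ̄ on [ts, tf] be (t̄m, D̄m), where the lines are y = Λmax·(t - ts) + D ts and y = -Λmin·(t - tf) + D tf with Λmin + Λmax > 0. Then D̄m - D̲m = ((Λmax - Λmin)·(D tf - D ts) + 2·Λmin·Λmax·(tf - ts))/(Λmin + Λmax), where D̲m is the value of the lower-envelope breakpoint from the previous statement. Moreover, if (D tf - D ts)/(tf - ts) ≤ Λmax, then D̄m - D̲m ≤ Λmax·(tf - ts). -/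
theorem stmt_4 (Dts Dtf ts tf Lmin Lmax : ℝ)
    (hts : ts < tf) (hLmin0 : 0 ≤ Lmin) (hLmax : 0 ≤ Lmax)
    (hsum : 0 < Lmin + Lmax)
    (tmU DmU tmL DmL : ℝ)
    (hU1 : Lmax * (tmU - ts) + Dts = DmU)
    (hU2 : -Lmin * (tmU - tf) + Dtf = DmU)
    (hL1 : -Lmin * (tmL - ts) + Dts = DmL)
    (hL2 : Lmax * (tmL - tf) + Dtf = DmL) :
    DmU - DmL = ((Lmax - Lmin) * (Dtf - Dts) + 2 * Lmin * Lmax * (tf - ts)) / (Lmin + Lmax)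
    ∧ (Lmin ≤ Lmax → (Dtf - Dts) / (tf - ts) ≤ Lmax → DmU - DmL ≤ Lmax * (tf - ts)) := by
  have key : (Lmin + Lmax) * (DmU - DmL)
      = (Lmax - Lmin) * (Dtf - Dts) + 2 * Lmin * Lmax * (tf - ts) := by
    linear_combination -(Lmin * hU1) - Lmax * hU2 + Lmax * hL1 + Lmin * hL2
  constructor
  · field_simp
    linarith [key]
  · intro hle hslope
    have h1 : Dtf - Dts ≤ Lmax * (tf - ts) := by
      have := (div_le_iff₀ (by linarith : (0:ℝ) < tf - ts)).mp hslope
      linarith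
    nlinarith [key, mul_nonneg (sub_nonneg.mpr hle) (sub_nonneg.mpr h1)]
end

section
/- Let G be a directed graph with time-dependent arc costs inducing minimum-travel-time functions D[u,v] : ℝ≥0 → ℝ>0 satisfying the triangle inequality D[a,c](t) ≤ D[a,b](t) + D[b,c](t + D[a,b](t)), slope bounds: for all t₁ < t₂, -Λmin ≤ (D[u,v](t₁) - D[u,v](t₂))/(t₁ - t₂) with Λmin ∈ [0,1), and the bounded-opposite-trips property D[u,v](t) ≤ ζ·D[v,u](t) for a constant ζ ≥ 1. Let D̲[u,v] := inf over t of D[u,v](t) denote the free-flow distance. Then for every origin o, destination d, landmark ℓ, and departure time t₀ with t₀ ≥ ζ·D[o,ℓ](t₀)/(1-Λmin): D̲[ℓ,d] ≤ (ζ/(1-Λmin))·D[o,ℓ](t₀) + D[o,d](t₀). -/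
theorem stmt_6 {V : Type*} (D : V → V → ℝ → ℝ) (Dlow : V → V → ℝ)
    (Lmin ζ : ℝ) (hLmin0 : 0 ≤ Lmin) (hLmin1 : Lmin < 1) (hζ : 1 ≤ ζ)
    (hpos : ∀ u v t, 0 < D u v t)
    (hlow : ∀ u v t, Dlow u v ≤ D u v t)
    (htri : ∀ a b c t, D a c t ≤ D a b t + D b c (t + D a b t))
    (hslope : ∀ u v (t₁ t₂ : ℝ), t₁ < t₂ →
      -Lmin ≤ (D u v t₁ - D u v t₂) / (t₁ - t₂))
    (hopp : ∀ u v t, D u v t ≤ ζ * D v u t)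
    (o d ℓ : V) (t₀ : ℝ)
    (ht₀ : ζ * D o ℓ t₀ / (1 - Lmin) ≤ t₀)
    (hx₀ : ∃ x₀, 0 ≤ x₀ ∧ x₀ ≤ t₀ ∧ x₀ = D ℓ o (t₀ - x₀)) :
    Dlow ℓ d ≤ ζ / (1 - Lmin) * D o ℓ t₀ + D o d t₀ := by
  obtain ⟨x₀, hx0, hxt, hxeq⟩ := hx₀
  have h1L : 0 < 1 - Lmin := by linarith
  -- x₀ ≤ ζ * D o ℓ t₀ / (1 - Lmin)
  have hxbound : x₀ ≤ ζ / (1 - Lmin) * D o ℓ t₀ := by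
    rcases eq_or_lt_of_le hx0 with h0 | h0
    · have := hpos o ℓ t₀
      have hζ0 : 0 < ζ := by linarith
      rw [← h0]
      positivity
    · have hlt : t₀ - x₀ < t₀ := by linarith
      have hs := hslope ℓ o (t₀ - x₀) t₀ hlt
      have hc : (t₀ - x₀) - t₀ < 0 := by linarith
      rw [le_div_iff_of_neg hc] at hs
      rw [← hxeq] at hs
      rw [div_mul_eq_mul_div, le_div_iff₀ h1L]
      nlinarith [hopp ℓ o t₀]
  -- triangle
  have htr := htri ℓ o d (t₀ - x₀)
  rw [← hxeq] at htr
  have : t₀ - x₀ + x₀ = t₀ := by ring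
  rw [this] at htr
  have hD := hopp (ℓ) o t₀
  calc Dlow ℓ d ≤ D ℓ d (t₀ - x₀) := hlow ℓ d _
    _ ≤ x₀ + D o d t₀ := htr
    _ ≤ ζ / (1 - Lmin) * D o ℓ t₀ + D o d t₀ := by linarith
end

section
/- Suppose a query algorithm returns the value Rₒ + Δ̄(t₀ + Rₒ), where Rₒ = D[o,ℓ](t₀) > 0 is the travel-time from origin o to the nearest landmark ℓ, Δ̄ is an approximation satisfying D[o,d](t₀) ≤ Rₒ + Δ̄(t₀ + Rₒ) and Δ̄(t₀ + Rₒ)/Rₒ ≤ (1+ε)·R_d/Rₒ + ψ - 1, where R_d = D[o,d](t₀) > 0, ε > 0, ψ ≥ 1. If moreover Δ̄(t₀ + Rₒ)/Rₒ ≥ (1+ε)·φ·(r+1) + ψ - 1 for some φ ≥ 1 and integer r ≥ 0, then R_d/Rₒ ≥ φ·(r+1), and consequently Rₒ + Δ̄(t₀ + Rₒ) ≤ (1 + ε + ψ/(φ·(r+1)))·R_d. -/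
theorem stmt_7 (Ro Rd Δ ε ψ φ : ℝ) (r : ℕ)
    (hRo : 0 < Ro) (hRd : 0 < Rd) (hε : 0 < ε) (hψ : 1 ≤ ψ) (hφ : 1 ≤ φ)
    (h1 : Rd ≤ Ro + Δ)
    (h2 : Δ / Ro ≤ (1 + ε) * Rd / Ro + ψ - 1)
    (h3 : (1 + ε) * φ * (r + 1) + ψ - 1 ≤ Δ / Ro) :
    φ * (r + 1) ≤ Rd / Ro ∧ Ro + Δ ≤ (1 + ε + ψ / (φ * (r + 1))) * Rd := by
  have hr1 : (0:ℝ) < (r:ℝ) + 1 := by positivity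
  have hφr : (0:ℝ) < φ * (r + 1) := by positivity
  have hA : (1 + ε) * φ * (r + 1) ≤ (1 + ε) * Rd / Ro := by linarith
  have hfirst : φ * (r + 1) ≤ Rd / Ro := by
    have h1ε : (0:ℝ) < 1 + ε := by linarith
    rw [mul_div_assoc] at hA
    nlinarith [mul_le_mul_of_nonneg_left hA (le_of_lt (inv_pos.mpr h1ε)),
      mul_inv_cancel₀ (ne_of_gt h1ε)]
  refine ⟨hfirst, ?_⟩
  have hRoRd : Ro * (φ * (r + 1)) ≤ Rd := by
    have := mul_le_mul_of_nonneg_left hfirst (le_of_lt hRo)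
    rwa [mul_div_cancel₀ _ (ne_of_gt hRo)] at this
  have hΔ : Δ ≤ ((1 + ε) * Rd / Ro + ψ - 1) * Ro := by
    have := mul_le_mul_of_nonneg_right h2 (le_of_lt hRo)
    rwa [div_mul_cancel₀ _ (ne_of_gt hRo)] at this
  have hΔ2 : Ro + Δ ≤ (1 + ε) * Rd + ψ * Ro := by
    have key : ((1 + ε) * Rd / Ro + ψ - 1) * Ro = (1 + ε) * Rd + ψ * Ro - Ro := by
      field_simp
    linarith
  have hψRo : ψ * Ro ≤ ψ / (φ * (r + 1)) * Rd := by
    rw [div_mul_eq_mul_div, le_div_iff₀ hφr]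
    nlinarith
  linarith
end

section
/- Let Γ, D : ℝ≥0 → ℝ>0 represent the Dijkstra-Rank and travel-time from o to d as functions of departure time, and suppose there exist λ ≥ 1, f(n), g(n) ≥ 1 with Γ(t) ≤ f(n)·(D(t))^λ and D(t) ≤ g(n)·(Γ(t))^{1/λ} for all t. If diam denotes a value satisfying (n/f(n))^{1/λ} ≤ diam ≤ g(n)·n^{1/λ} (the free-flow diameter, whose Dijkstra-Rank is n), and T = diam^{1/ν} for some ν ∈ (0,1), then n^{(1 - λ·log f(n)/log n)/(νλ)} ≤ T ≤ n^{(1 + λ·log g(n)/log n)/(νλ)} (for n ≥ 2, all logs base n well-defined). In particular, if λ·log(f(n))/log(n) → 0 and λ·log(g(n))/log(n) → 0 as n → ∞, then log_n(T) = 1/(νλ) · (1 ± o(1)). -/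
theorem stmt_11 (n lam f g diam ν T : ℝ)
    (hn : 2 ≤ n) (hlam : 1 ≤ lam) (hf : 1 ≤ f) (hg : 1 ≤ g)
    (hν0 : 0 < ν) (hν1 : ν < 1)
    (hdiam_lo : (n / f) ^ (1 / lam) ≤ diam)
    (hdiam_hi : diam ≤ g * n ^ (1 / lam))
    (hT : T = diam ^ (1 / ν)) :
    n ^ ((1 - lam * Real.log f / Real.log n) / (ν * lam)) ≤ T ∧
    T ≤ n ^ ((1 + lam * Real.log g / Real.log n) / (ν * lam)) := by
  have hn0 : (0:ℝ) < n := by linarith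
  have hlam0 : (0:ℝ) < lam := by linarith
  have hf0 : (0:ℝ) < f := by linarith
  have hg0 : (0:ℝ) < g := by linarith
  have hln : 0 < Real.log n := Real.log_pos (by linarith)
  have hnl : 0 < n ^ (1/lam) := Real.rpow_pos_of_pos hn0 _
  have hb : 0 < n ^ (1/lam) / f := div_pos hnl hf0
  have hbg : 0 < g * n ^ (1/lam) := mul_pos hg0 hnl
  have hdiam0 : 0 ≤ diam :=
    le_trans (Real.rpow_nonneg (div_nonneg hn0.le hf0.le) _) hdiam_lo
  constructor
  · -- lower bound
    have key1 : n ^ ((1 - lam * Real.log f / Real.log n) / (ν * lam))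
        = (n ^ (1/lam) / f) ^ (1/ν) := by
      rw [Real.rpow_def_of_pos hn0, Real.rpow_def_of_pos hb,
        Real.log_div (ne_of_gt hnl) (ne_of_gt hf0), Real.log_rpow hn0]
      congr 1
      field_simp
    have h1 : n ^ (1/lam) / f ≤ (n / f) ^ (1/lam) := by
      rw [Real.div_rpow hn0.le hf0.le]
      apply div_le_div_of_nonneg_left hnl.le (Real.rpow_pos_of_pos hf0 _)
      calc f ^ (1/lam) ≤ f ^ (1:ℝ) :=
            Real.rpow_le_rpow_of_exponent_le hf (by
              rw [div_le_one hlam0]; exact hlam)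
        _ = f := Real.rpow_one f
    have h2 : n ^ (1/lam) / f ≤ diam := le_trans h1 hdiam_lo
    rw [key1, hT]
    exact Real.rpow_le_rpow hb.le h2 (by positivity)
  · -- upper bound
    have key2 : n ^ ((1 + lam * Real.log g / Real.log n) / (ν * lam))
        = (g * n ^ (1/lam)) ^ (1/ν) := by
      rw [Real.rpow_def_of_pos hn0, Real.rpow_def_of_pos hbg,
        Real.log_mul (ne_of_gt hg0) (ne_of_gt hnl), Real.log_rpow hn0]
      congr 1
      field_simp
      ring
    rw [key2, hT]
    exact Real.rpow_le_rpow hdiam0 hdiam_hi (by positivity)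
end
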